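/- arXiv:2412.15715 — 2 statements merged into one kernel-verified Lean document; each statement's English description precedes it below -/
import Mathlib

section
/- Fix k ≥ 0. Let Sd²Δ[k] denote the poset whose elements are chains (I₁, …, I_r), with r ≥ 1 and I₁ ⊊ I₂ ⊊ ⋯ ⊊ I_r nonempty subsets of {0, 1, …, k}, ordered by (I₁, …, I_r) ≤ (J₁, …, J_s) if and only if {I₁, …, I_r} ⊆ {J₁, …, J_s} as sets of subsets. Let Sd²∂Δ[k] ⊆ Sd²Δ[k] denote the subposet (with the induced order) consisting of those chains (I₁, …, I_r) with I_r ≠ {0, 1, …, k}. Then this inclusion is a weakly solid sieve of posets: it is full, it is down-closed, and it is weakly solid. -/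
/-!
STATEMENT 1: For `k ≥ 0`, the inclusion `c Sd² ∂Δ[k] ⊆ c Sd² Δ[k]` of the double
barycentric subdivision of the boundary into that of the `k`-simplex is a weakly
solid sieve of posets.
-/

open Finset

/-- The poset `c Sd² Δ[k]`: its elements are chains `(I₁ ⊊ ⋯ ⊊ I_r)` (`r ≥ 1`) of nonempty
subsets of `{0, …, k}`, encoded as nonempty finite sets of nonempty subsets of `Fin (k+1)`
that are chains for inclusion; the order is given by inclusion of the underlying sets of
subsets. -/
def SdTwoSimplex (k : ℕ) : Type :=
  {S : Finset (Finset (Fin (k + 1))) //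
    S.Nonempty ∧ (∀ I ∈ S, I.Nonempty) ∧ IsChain (· ⊆ ·) (S : Set (Finset (Fin (k + 1))))}

instance (k : ℕ) : PartialOrder (SdTwoSimplex k) :=
  Subtype.partialOrder _

/-- The subset of `c Sd² Δ[k]` corresponding to `c Sd² ∂Δ[k]`: the chains `(I₁ ⊊ ⋯ ⊊ I_r)`
whose top element `I_r` is not all of `{0, …, k}`, i.e. those chains not containing the
full subset `{0, …, k}`. -/
def SdTwoBoundary (k : ℕ) : Set (SdTwoSimplex k) :=
  {S | (Finset.univ : Finset (Fin (k + 1))) ∉ S.1}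

/-- The inclusion `c Sd² ∂Δ[k] ⊆ c Sd² Δ[k]` is a weakly solid sieve of posets:
(i) it is full (the order on the subposet is the one induced from `c Sd² Δ[k]`),
(ii) it is down-closed, and (iii) it is weakly solid. -/
theorem sdTwoBoundary_weakly_solid_sieve (k : ℕ) :
    -- full: for p, p' in the subposet, `p ≤ p'` in `c Sd² Δ[k]` iff `p ≤ p'` in the
    -- induced order on the subposet
    (∀ p p' : {S : SdTwoSimplex k // S ∈ SdTwoBoundary k},
      (p : SdTwoSimplex k) ≤ (p' : SdTwoSimplex k) ↔ p ≤ p') ∧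
    -- down-closed
    (∀ p ∈ SdTwoBoundary k, ∀ q : SdTwoSimplex k, q ≤ p → q ∈ SdTwoBoundary k) ∧
    -- weakly solid
    (∀ p₁ ∈ SdTwoBoundary k, ∀ p₂ ∈ SdTwoBoundary k, ∀ q : SdTwoSimplex k,
      p₁ ≤ q → p₂ ≤ q →
      ∃ p ∈ SdTwoBoundary k, p₁ ≤ p ∧ p₂ ≤ p ∧ p ≤ q) := by
  refine ⟨fun p p' => Iff.rfl, fun p hp q hq h => hp (hq h), ?_⟩
  intro p₁ hp₁ p₂ hp₂ q h₁ h₂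
  refine ⟨⟨p₁.1 ∪ p₂.1, ?_, ?_, ?_⟩, ?_, ?_, ?_, ?_⟩
  · exact p₁.2.1.mono Finset.subset_union_left
  · intro I hI
    rcases Finset.mem_union.1 hI with h | h
    · exact p₁.2.2.1 I h
    · exact p₂.2.2.1 I h
  · refine IsChain.mono ?_ q.2.2.2
    intro x hx
    rcases Finset.mem_coe.1 hx |> Finset.mem_union.1 with h | h
    · exact h₁ h
    · exact h₂ h
  · intro h
    rcases Finset.mem_union.1 h with h | h
    · exact hp₁ h
    · exact hp₂ h
  · exact Finset.subset_union_left
  · exact Finset.subset_union_right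
  · exact Finset.union_subset h₁ h₂
end

section
/- Fix k ≥ 1 and 0 ≤ t ≤ k. Let Sd²Δ[k] denote the poset whose elements are chains (I₁, …, I_r), with r ≥ 1 and I₁ ⊊ I₂ ⊊ ⋯ ⊊ I_r nonempty subsets of {0, 1, …, k}, ordered by (I₁, …, I_r) ≤ (J₁, …, J_s) if and only if {I₁, …, I_r} ⊆ {J₁, …, J_s} as sets of subsets. Let Sd²Λᵗ[k] ⊆ Sd²Δ[k] denote the subposet (with the induced order) consisting of those chains (I₁, …, I_r) such that no I_i equals {0, 1, …, k} and no I_i equals {0, 1, …, k} ∖ {t}. Then this inclusion is a weakly solid sieve of posets: it is full, it is down-closed, and it is weakly solid. -/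
/-!
STATEMENT 2: For `k ≥ 1` and `0 ≤ t ≤ k`, the inclusion `c Sd² Λᵗ[k] ⊆ c Sd² Δ[k]` of the
double barycentric subdivision of the `t`-horn into that of the `k`-simplex is a weakly
solid sieve of posets.
-/

open Finset

/-- The subset of `c Sd² Δ[k]` corresponding to `c Sd² Λᵗ[k]`: the chains `(I₁ ⊊ ⋯ ⊊ I_r)`
such that no `I_i` equals `{0, …, k}` and no `I_i` equals `{0, …, k} ∖ {t}`. -/
def SdTwoHorn (k : ℕ) (t : Fin (k + 1)) : Set (SdTwoSimplex k) :=
  {S | (Finset.univ : Finset (Fin (k + 1))) ∉ S.1 ∧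
    (Finset.univ : Finset (Fin (k + 1))) \ {t} ∉ S.1}

/-- The inclusion `c Sd² Λᵗ[k] ⊆ c Sd² Δ[k]`, for `k ≥ 1` and `0 ≤ t ≤ k`, is a weakly solid
sieve of posets: (i) it is full (the order on the subposet is the one induced from
`c Sd² Δ[k]`), (ii) it is down-closed, and (iii) it is weakly solid. -/
theorem sdTwoHorn_weakly_solid_sieve (k : ℕ) (hk : 1 ≤ k) (t : Fin (k + 1)) :
    -- full: for p, p' in the subposet, `p ≤ p'` in `c Sd² Δ[k]` iff `p ≤ p'` in the
    -- induced order on the subposet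
    (∀ p p' : {S : SdTwoSimplex k // S ∈ SdTwoHorn k t},
      (p : SdTwoSimplex k) ≤ (p' : SdTwoSimplex k) ↔ p ≤ p') ∧
    -- down-closed
    (∀ p ∈ SdTwoHorn k t, ∀ q : SdTwoSimplex k, q ≤ p → q ∈ SdTwoHorn k t) ∧
    -- weakly solid
    (∀ p₁ ∈ SdTwoHorn k t, ∀ p₂ ∈ SdTwoHorn k t, ∀ q : SdTwoSimplex k,
      p₁ ≤ q → p₂ ≤ q →
      ∃ p ∈ SdTwoHorn k t, p₁ ≤ p ∧ p₂ ≤ p ∧ p ≤ q) := by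
  refine ⟨fun p p' => Iff.rfl, fun p hp q hq => ?_, ?_⟩
  · exact ⟨fun h => hp.1 (hq h), fun h => hp.2 (hq h)⟩
  · intro p₁ hp₁ p₂ hp₂ q hq₁ hq₂
    refine ⟨⟨p₁.1 ∪ p₂.1, ?_, ?_, ?_⟩, ⟨?_, ?_⟩, ?_, ?_, ?_⟩
    · exact p₁.2.1.mono subset_union_left
    · intro I hI
      rcases Finset.mem_union.mp hI with h | h
      · exact p₁.2.2.1 I h
      · exact p₂.2.2.1 I h
    · refine q.2.2.2.mono ?_
      intro x hx
      rcases Finset.mem_union.mp hx with h | h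
      · exact hq₁ h
      · exact hq₂ h
    · intro h
      rcases Finset.mem_union.mp h with h | h
      · exact hp₁.1 h
      · exact hp₂.1 h
    · intro h
      rcases Finset.mem_union.mp h with h | h
      · exact hp₁.2 h
      · exact hp₂.2 h
    · exact subset_union_left
    · exact subset_union_right
    · intro x hx
      rcases Finset.mem_union.mp hx with h | h
      · exact hq₁ h
      · exact hq₂ h
end
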